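/- arXiv:1602.08627 — 2 statements merged into one kernel-verified Lean document; each statement's English description precedes it below -/
import Mathlib

section
/- In a pointed regular category, ideals are stable under pullback: if i : I → Y is an ideal and f : Y' → Y is any morphism, then the pullback i' : I' → Y' of i along f is an ideal. -/
open CategoryTheory CategoryTheory.Limits

universe v u

variable {C : Type u} [Category.{v} C]

/-- `i : I ⟶ Y` is a zero-class of the span `(d : R ⟶ X, c : R ⟶ Y)`:
it fits in a pullback of `⟨d,c⟩` along `⟨0, 1_Y⟩`. -/
def IsZeroClass [HasZeroMorphisms C] [HasBinaryProducts C]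
    {R X Y I : C} (d : R ⟶ X) (c : R ⟶ Y) (i : I ⟶ Y) : Prop :=
  ∃ l : I ⟶ R, IsPullback l i (prod.lift d c) (prod.lift (0 : Y ⟶ X) (𝟙 Y))

/-- `k : K ⟶ X` is a clot: a monomorphism which is the zero-class of a reflexive
relation on `X`. -/
def IsClot [HasZeroMorphisms C] [HasBinaryProducts C] {K X : C} (k : K ⟶ X) : Prop :=
  Mono k ∧ ∃ (R : C) (d c : R ⟶ X) (e : X ⟶ R),
    Mono (prod.lift d c) ∧ e ≫ d = 𝟙 X ∧ e ≫ c = 𝟙 X ∧ IsZeroClass d c k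

/-- `i : I ⟶ Y` is an ideal: a monomorphism which is the regular image of a clot,
i.e. there are a clot `k : K ⟶ X` and regular epimorphisms `p : X ⟶ Y`, `q : K ⟶ I`
with `i ∘ q = p ∘ k`. -/
def IsIdeal [HasZeroMorphisms C] [HasBinaryProducts C] {I Y : C} (i : I ⟶ Y) : Prop :=
  Mono i ∧ ∃ (K X : C) (k : K ⟶ X) (p : X ⟶ Y) (q : K ⟶ I),
    IsClot k ∧ Nonempty (RegularEpi p) ∧ Nonempty (RegularEpi q) ∧ q ≫ i = k ≫ p

/-- A regular category: finitely complete, with coequalizers of kernel pairs,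
and regular epimorphisms stable under pullback. -/
class RegularCategory (C : Type u) [Category.{v} C] extends HasFiniteLimits C : Prop where
  hasCoequalizerOfKernelPair : ∀ {X Y : C} (f : X ⟶ Y),
    HasCoequalizer (pullback.fst f f) (pullback.snd f f)
  regularEpiStable : ∀ {P X Y Z : C} (f : X ⟶ Z) (g : Y ⟶ Z) (fst : P ⟶ X) (snd : P ⟶ Y),
    IsPullback fst snd f g → Nonempty (RegularEpi f) → Nonempty (RegularEpi snd)

/-
Pull the presentation `q ≫ i = k ≫ p` back along `f`: with `X' = X ×_Y Y'` and `K' = K ×_X X'`,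
the regular epimorphisms `X' ⟶ Y'` and `K' ⟶ I'` are pullbacks of `p` and `q` (the square
`K' ⟶ I'` over `K ⟶ I` is a pullback because both `K'` and `I'` are pullbacks over `Y`), and
pulling the reflexive relation back along `X' ⟶ X` exhibits `K' ⟶ X'` as a clot.
-/

section

variable [HasBinaryProducts C]

lemma exists_reflexive_of_isPullback {R X R' X' : C} {d c : R ⟶ X} {e : X ⟶ R}
    (hed : e ≫ d = 𝟙 X) (hec : e ≫ c = 𝟙 X) {g : X' ⟶ X} {r : R' ⟶ R} {d' c' : R' ⟶ X'}
    (hR : IsPullback r (prod.lift d' c') (prod.lift d c) (prod.map g g)) :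
    ∃ e' : X' ⟶ R', e' ≫ d' = 𝟙 X' ∧ e' ≫ c' = 𝟙 X' := by
  have hdiag := hR.lift_snd (g ≫ e) (prod.lift (𝟙 X') (𝟙 X')) (by ext <;> simp [hed, hec])
  exact ⟨_, by simpa [prod.lift_fst] using hdiag =≫ prod.fst,
    by simpa [prod.lift_snd] using hdiag =≫ prod.snd⟩

variable [HasZeroMorphisms C]

lemma prod_lift_zero_id_comp_map {X' X : C} (g : X' ⟶ X) :
    prod.lift (0 : X' ⟶ X') (𝟙 X') ≫ prod.map g g = g ≫ prod.lift (0 : X ⟶ X) (𝟙 X) := by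
  ext <;> simp

lemma IsZeroClass.of_isPullback {R X K R' X' K' : C} {d c : R ⟶ X} {k : K ⟶ X}
    (hk : IsZeroClass d c k) {g : X' ⟶ X} {r : R' ⟶ R} {d' c' : R' ⟶ X'}
    (hR : IsPullback r (prod.lift d' c') (prod.lift d c) (prod.map g g))
    {πK : K' ⟶ K} {k' : K' ⟶ X'} (hK : IsPullback πK k' k g) :
    IsZeroClass d' c' k' := by
  obtain ⟨l, hl⟩ := hk
  have hzero := prod_lift_zero_id_comp_map g
  let l' : K' ⟶ R' := hR.lift (πK ≫ l) (k' ≫ prod.lift 0 (𝟙 X')) (by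
    rw [Category.assoc, Category.assoc, hzero, hl.w, hK.w_assoc])
  have outer : IsPullback (l' ≫ r) k' (prod.lift d c)
      (prod.lift (0 : X' ⟶ X') (𝟙 X') ≫ prod.map g g) := by
    rw [hR.lift_fst, hzero]
    exact hK.paste_horiz hl
  exact ⟨l', outer.of_right (hR.lift_snd _ _ _) hR⟩

lemma IsClot.of_isPullback [HasPullbacks C] {K X K' X' : C} {k : K ⟶ X} (hk : IsClot k)
    {g : X' ⟶ X} {πK : K' ⟶ K} {k' : K' ⟶ X'} (hK : IsPullback πK k' k g) : IsClot k' := by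
  obtain ⟨_, R, d, c, e, _, hed, hec, hzc⟩ := hk
  let m := pullback.snd (prod.lift d c) (prod.map g g)
  have hR : IsPullback (pullback.fst _ _) (prod.lift (m ≫ prod.fst) (m ≫ prod.snd))
      (prod.lift d c) (prod.map g g) := by
    rw [← prod.comp_lift, prod.lift_fst_snd, Category.comp_id]
    exact IsPullback.of_hasPullback _ _
  obtain ⟨e', he'd, he'c⟩ := exists_reflexive_of_isPullback hed hec hR
  exact ⟨hK.mono_snd_of_mono, _, _, _, e', hR.mono_snd_of_mono, he'd, he'c,
    hzc.of_isPullback hR hK⟩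

end

theorem isIdeal_of_isPullback_general {C : Type u} [Category.{v} C]
    [HasZeroMorphisms C] [RegularCategory C]
    {I Y Y' I' : C} (i : I ⟶ Y) (f : Y' ⟶ Y) (g : I' ⟶ I) (i' : I' ⟶ Y')
    (h : IsPullback g i' i f) (hi : IsIdeal i) :
    IsIdeal i' := by
  obtain ⟨_, K, X, k, p, q, hk, hp, hq, hkp⟩ := hi
  obtain ⟨X', g₀, p', hX⟩ : ∃ (X' : C) (g₀ : X' ⟶ X) (p' : X' ⟶ Y'), IsPullback g₀ p' p f :=
    ⟨_, _, _, .of_hasPullback p f⟩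
  obtain ⟨K', πK, k', hK⟩ : ∃ (K' : C) (πK : K' ⟶ K) (k' : K' ⟶ X'), IsPullback πK k' k g₀ :=
    ⟨_, _, _, .of_hasPullback k g₀⟩
  have hw : (πK ≫ q) ≫ i = (k' ≫ p') ≫ f := by
    simp only [Category.assoc, hkp, ← hX.w, hK.w_assoc]
  have hq' : IsPullback πK (h.lift _ _ hw) q g := by
    refine IsPullback.of_bot ?_ (h.lift_fst _ _ _).symm h
    rw [h.lift_snd, hkp]
    exact hK.paste_vert hX
  exact ⟨h.mono_snd_of_mono, K', X', k', p', _, hk.of_isPullback hK,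
    RegularCategory.regularEpiStable _ _ _ _ hX hp,
    RegularCategory.regularEpiStable _ _ _ _ hq' hq, h.lift_snd _ _ _⟩

/-- In a pointed regular category, ideals are stable under pullback: if `i : I ⟶ Y` is an
ideal and `f : Y' ⟶ Y` is any morphism, then the pullback `i' : I' ⟶ Y'` of `i` along `f`
is an ideal. -/
theorem isIdeal_of_isPullback {C : Type u} [Category.{v} C]
    [HasZeroObject C] [HasZeroMorphisms C] [RegularCategory C]
    {I Y Y' I' : C} (i : I ⟶ Y) (f : Y' ⟶ Y) (g : I' ⟶ I) (i' : I' ⟶ Y')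
    (h : IsPullback g i' i f) (hi : IsIdeal i) :
    IsIdeal i' :=
  isIdeal_of_isPullback_general i f g i' h hi
end

section
/- In a pointed exact Mal'tsev category, ideals and kernels coincide: a monomorphism i : I → Y is an ideal if and only if it is a kernel of some morphism. -/
open CategoryTheory CategoryTheory.Limits

universe v u

variable {C : Type u} [Category.{v} C]

/-- `(d, c)` is an internal reflexive relation on `X`. -/
def IsReflexiveRelation [HasBinaryProducts C] {R X : C} (d c : R ⟶ X) : Prop :=
  Mono (prod.lift d c) ∧ ∃ e : X ⟶ R, e ≫ d = 𝟙 X ∧ e ≫ c = 𝟙 X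

/-- `(d, c)` is an internal equivalence relation on `X`: a reflexive relation which is
moreover symmetric and transitive in the internal sense. -/
def IsEquivalenceRelation [HasBinaryProducts C] [HasPullbacks C] {R X : C}
    (d c : R ⟶ X) : Prop :=
  IsReflexiveRelation d c ∧
  (∃ σ : R ⟶ R, σ ≫ d = c ∧ σ ≫ c = d) ∧
  (∃ τ : pullback c d ⟶ R,
    τ ≫ d = pullback.fst c d ≫ d ∧ τ ≫ c = pullback.snd c d ≫ c)

/-!
Kernels are clots, since a kernel of `f` is the zero-class of the kernel pair of `f`; hence they
are ideals. Conversely, let `i` be the regular image under `p` of the zero-class `k` of a reflexive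
relation `R`. By the Mal'tsev property and exactness, `R` is the kernel pair of some `φ`, and the
image `S` of `R` under `p × p`, again reflexive, is the kernel pair of some `f`; `i` lies in the
zero-class of `S`, so `i ≫ f = 0`. If `a ≫ f = 0`, then `(0, a)` lifts, after a cover, to
`(x₁, x₂)` in `R` with `p x₁ = 0`. Since the kernel pairs of `φ` and `p` permute (every relation in
a Mal'tsev category is difunctional), there is, after another cover, an `x` with `φ x = 0` and
`p x = a`. Then `x` factors through `k`, so `a` factors through `i`.
-/

attribute [local simp] prod.lift_fst prod.lift_snd prod.lift_fst_assoc prod.lift_snd_assoc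
  pullback.lift_fst pullback.lift_snd pullback.lift_fst_assoc pullback.lift_snd_assoc

instance RegularCategory.regular [RegularCategory C] : Regular C where
  hasCoequalizer_of_isKernelPair {_ _ _ f g₁ g₂} h := by
    have := RegularCategory.hasCoequalizerOfKernelPair f
    exact hasColimit_of_iso (G := parallelPair g₁ g₂)
      (F := parallelPair (pullback.fst f f) (pullback.snd f f))
      (parallelPair.ext h.isoPullback (Iso.refl _) (by simp) (by simp))
  regularEpiIsStableUnderBaseChange :=
    ⟨fun sq ⟨⟨hg⟩⟩ => isRegularEpi_of_regularEpi
      (RegularCategory.regularEpiStable _ _ _ _ sq ⟨hg⟩).some⟩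

lemma IsEquivalenceRelation.exists_trans [HasBinaryProducts C] [HasPullbacks C] {R X : C}
    {d c : R ⟶ X} (h : _root_.IsEquivalenceRelation d c) {T : C} {x y : T ⟶ R}
    (hxy : x ≫ c = y ≫ d) :
    ∃ z : T ⟶ R, z ≫ d = x ≫ d ∧ z ≫ c = y ≫ c := by
  obtain ⟨-, -, τ, hτd, hτc⟩ := h
  exact ⟨pullback.lift x y hxy ≫ τ, by simp [hτd], by simp [hτc]⟩

/-- The relation `{(m, m') | (r₁ m, r₂ m') ∈ r}` on `M` is reflexive, and its transitivity
yields difunctionality of `r`. -/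
theorem difunctional_of_maltsev [HasFiniteLimits C]
    (maltsev : ∀ {R X : C} (d c : R ⟶ X), IsReflexiveRelation d c →
      _root_.IsEquivalenceRelation d c)
    {M A B T : C} (r : M ⟶ A ⨯ B) [Mono r] (m₁ m₂ m₃ : T ⟶ M)
    (h₁₂ : m₁ ≫ r ≫ prod.snd = m₂ ≫ r ≫ prod.snd)
    (h₂₃ : m₂ ≫ r ≫ prod.fst = m₃ ≫ r ≫ prod.fst) :
    ∃ m : T ⟶ M, m ≫ r = prod.lift (m₁ ≫ r ≫ prod.fst) (m₃ ≫ r ≫ prod.snd) := by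
  let D := pullback r (prod.map (r ≫ prod.fst) (r ≫ prod.snd))
  let d : D ⟶ M := pullback.snd _ _ ≫ prod.fst
  let c : D ⟶ M := pullback.snd _ _ ≫ prod.snd
  have hdc : prod.lift d c = pullback.snd _ _ := by ext <;> simp [d, c]
  have mem : ∀ {S : C} (n m m' : S ⟶ M),
      n ≫ r = prod.lift (m ≫ r ≫ prod.fst) (m' ≫ r ≫ prod.snd) →
        ∃ z : S ⟶ D, z ≫ pullback.fst _ _ = n ∧ z ≫ d = m ∧ z ≫ c = m' :=
    fun n m m' h => ⟨pullback.lift n (prod.lift m m') (by simp [h]), by simp, by simp [d],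
      by simp [c]⟩
  obtain ⟨e, -, hed, hec⟩ := mem (𝟙 M) (𝟙 M) (𝟙 M) (by ext <;> simp)
  have hD : _root_.IsEquivalenceRelation d c := maltsev d c ⟨hdc ▸ inferInstance, e, hed, hec⟩
  obtain ⟨x, -, hxd, hxc⟩ := mem m₁ m₁ m₂ (by ext <;> simp [h₁₂])
  obtain ⟨y, -, hyd, hyc⟩ := mem m₃ m₂ m₃ (by ext <;> simp [h₂₃])
  obtain ⟨z, hzd, hzc⟩ := hD.exists_trans (hxc.trans hyd.symm)
  refine ⟨z ≫ pullback.fst _ _, ?_⟩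
  rw [Category.assoc, pullback.condition]
  ext <;> simp [← hxd, ← hyc, ← hzd, ← hzc, d, c]

/-- In a regular Mal'tsev category the kernel pairs of two maps out of `X` permute, up to a
cover: apply difunctionality to the image of `⟨φ, p⟩`. -/
theorem exists_cover_of_maltsev [RegularCategory C]
    (maltsev : ∀ {R X : C} (d c : R ⟶ X), IsReflexiveRelation d c →
      _root_.IsEquivalenceRelation d c)
    {X W Y T : C} (φ : X ⟶ W) (p : X ⟶ Y) (x₀ x₁ x₂ : T ⟶ X)
    (h₀₁ : x₀ ≫ p = x₁ ≫ p) (h₁₂ : x₁ ≫ φ = x₂ ≫ φ) :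
    ∃ (T' : C) (c : T' ⟶ T) (x : T' ⟶ X),
      StrongEpi c ∧ x ≫ φ = c ≫ x₀ ≫ φ ∧ x ≫ p = c ≫ x₂ ≫ p := by
  let F := Regular.strongEpiMonoFactorisation (prod.lift φ p)
  obtain ⟨m, hm⟩ := difunctional_of_maltsev maltsev F.m (x₀ ≫ F.e) (x₁ ≫ F.e) (x₂ ≫ F.e)
    (by simp [h₀₁]) (by simp [h₁₂])
  have hx : pullback.fst F.e m ≫ prod.lift φ p =
      pullback.snd F.e m ≫ prod.lift (x₀ ≫ φ) (x₂ ≫ p) :=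
    calc pullback.fst F.e m ≫ prod.lift φ p = pullback.fst F.e m ≫ F.e ≫ F.m := by rw [F.fac]
      _ = pullback.snd F.e m ≫ m ≫ F.m := by rw [reassoc_of% pullback.condition]
      _ = _ := by rw [hm]; ext <;> simp
  refine ⟨_, pullback.snd F.e m, pullback.fst F.e m, inferInstance, ?_, ?_⟩
  · simpa using hx =≫ prod.fst
  · simpa using hx =≫ prod.snd

section ZeroClass

variable [HasZeroMorphisms C] [HasBinaryProducts C] {R X Y K : C} {d : R ⟶ X} {c : R ⟶ Y}
  {k : K ⟶ Y}

lemma IsZeroClass.exists_comp_eq (h : IsZeroClass d c k) :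
    ∃ l : K ⟶ R, l ≫ d = 0 ∧ l ≫ c = k := by
  obtain ⟨l, hl⟩ := h
  exact ⟨l, by simpa using hl.w =≫ prod.fst, by simpa using hl.w =≫ prod.snd⟩

lemma IsZeroClass.exists_lift (h : IsZeroClass d c k) {T : C} {z : T ⟶ R} (hz : z ≫ d = 0) :
    ∃ u : T ⟶ K, u ≫ k = z ≫ c := by
  obtain ⟨l, hl⟩ := h
  exact ⟨hl.lift z (z ≫ c) (by ext <;> simp [hz]), hl.lift_snd _ _ _⟩

end ZeroClass

theorem exists_cover_of_isZeroClass_of_maltsev [RegularCategory C] [HasZeroMorphisms C]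
    (maltsev : ∀ {R X : C} (d c : R ⟶ X), IsReflexiveRelation d c →
      _root_.IsEquivalenceRelation d c)
    {R X W K Y T : C} {d c : R ⟶ X} {φ : X ⟶ W} (hφ : IsKernelPair φ d c) {k : K ⟶ X}
    (hk : IsZeroClass d c k) (p : X ⟶ Y) (r : T ⟶ R) (hr : r ≫ d ≫ p = 0) :
    ∃ (T' : C) (c' : T' ⟶ T) (u : T' ⟶ K), StrongEpi c' ∧ u ≫ k ≫ p = c' ≫ r ≫ c ≫ p := by
  obtain ⟨T', c', x, hc', hxφ, hxp⟩ := exists_cover_of_maltsev maltsev φ p 0 (r ≫ d) (r ≫ c)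
    (by simp [hr]) (by simp [hφ.w])
  obtain ⟨u, hu⟩ := hk.exists_lift (hφ.lift_fst 0 x (by simpa using hxφ.symm))
  refine ⟨T', c', u, hc', ?_⟩
  rw [reassoc_of% hu, hφ.lift_snd_assoc, hxp, Category.assoc]

theorem exists_image_isReflexiveRelation [RegularCategory C] {R X Y : C} {d c : R ⟶ X}
    {e : X ⟶ R} (hed : e ≫ d = 𝟙 X) (hec : e ≫ c = 𝟙 X) (p : X ⟶ Y) [StrongEpi p] :
    ∃ (S : C) (d' c' : S ⟶ Y) (π : R ⟶ S), IsRegularEpi π ∧ π ≫ d' = d ≫ p ∧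
      π ≫ c' = c ≫ p ∧ IsReflexiveRelation d' c' := by
  let F := Regular.strongEpiMonoFactorisation (prod.lift (d ≫ p) (c ≫ p))
  have hF : prod.lift (F.m ≫ prod.fst) (F.m ≫ prod.snd) = F.m := by ext <;> simp
  have sq : CommSq (e ≫ F.e) p F.m (diag Y) :=
    ⟨by ext <;> simp [reassoc_of% hed, reassoc_of% hec]⟩
  exact ⟨F.I, F.m ≫ prod.fst, F.m ≫ prod.snd, F.e, inferInstance, by simp, by simp,
    by rw [hF]; infer_instance, sq.lift, by simp, by simp⟩

theorem IsIdeal.exists_isLimit_kernelFork [RegularCategory C] [HasZeroMorphisms C]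
    (maltsev : ∀ {R X : C} (d c : R ⟶ X), IsReflexiveRelation d c →
      _root_.IsEquivalenceRelation d c)
    (exact : ∀ {R X : C} (d c : R ⟶ X), _root_.IsEquivalenceRelation d c →
      ∃ (Z : C) (f : X ⟶ Z), IsKernelPair f d c)
    {I Y : C} {i : I ⟶ Y} (hi : IsIdeal i) :
    ∃ (Z : C) (f : Y ⟶ Z) (w : i ≫ f = 0), Nonempty (IsLimit (KernelFork.ofι i w)) := by
  obtain ⟨hm, K, X, k, p, q, ⟨-, R, d, c, e, hR, hed, hec, hk⟩, ⟨hp⟩, ⟨hq⟩, hqi⟩ := hi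
  have := isRegularEpi_of_regularEpi hp
  have := isRegularEpi_of_regularEpi hq
  obtain ⟨W, φ, hφ⟩ := exact d c (maltsev d c ⟨hR, e, hed, hec⟩)
  obtain ⟨S, d', c', π, hπ, hπd, hπc, hS⟩ := exists_image_isReflexiveRelation hed hec p
  obtain ⟨Z, f, hf⟩ := exact d' c' (maltsev d' c' hS)
  obtain ⟨l, hld, hlc⟩ := hk.exists_comp_eq
  have sqi : CommSq (l ≫ π) q (prod.lift d' c') (prod.lift 0 i) :=
    ⟨by ext <;> simp [hπd, hπc, reassoc_of% hld, reassoc_of% hlc, hqi]⟩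
  have : Mono (prod.lift d' c') := hS.1
  have hid : sqi.lift ≫ d' = 0 := by simpa using sqi.fac_right =≫ prod.fst
  have hic : sqi.lift ≫ c' = i := by simpa using sqi.fac_right =≫ prod.snd
  have hif : i ≫ f = 0 := by rw [← hic, Category.assoc, ← hf.w, reassoc_of% hid, zero_comp]
  have hker : ∀ {T : C} (a : T ⟶ Y), a ≫ f = 0 → ∃ u : T ⟶ I, u ≫ i = a := by
    intro T a ha
    let t := hf.lift 0 a (by simp [ha])
    obtain ⟨T', c', u, hc', hu⟩ := exists_cover_of_isZeroClass_of_maltsev maltsev hφ hk p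
      (pullback.fst π t) (by rw [← hπd, pullback.condition_assoc]; simp [t])
    have sqa : CommSq (u ≫ q) (c' ≫ pullback.snd π t) i a :=
      ⟨by rw [Category.assoc, hqi, hu, ← hπc, pullback.condition_assoc]; simp [t]⟩
    exact ⟨sqa.lift, sqa.fac_right⟩
  have : Mono i := hm
  exact ⟨Z, f, hif, ⟨KernelFork.IsLimit.ofι' i hif fun a ha ↦
    ⟨(hker a ha).choose, (hker a ha).choose_spec⟩⟩⟩

section Kernel

variable [HasZeroMorphisms C] [HasBinaryProducts C]

lemma isZeroClass_of_isKernelPair {R Y Z I : C} {d c : R ⟶ Y} {f : Y ⟶ Z}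
    (hf : IsKernelPair f d c) {i : I ⟶ Y} {w : i ≫ f = 0} (hi : IsLimit (KernelFork.ofι i w)) :
    IsZeroClass d c i := by
  have : Mono i := Fork.IsLimit.mono hi
  have hcone : ∀ {T : C} {z : T ⟶ R} {y : T ⟶ Y},
      z ≫ prod.lift d c = y ≫ prod.lift 0 (𝟙 Y) → z ≫ d = 0 ∧ z ≫ c = y := fun h ↦
    ⟨by simpa using h =≫ prod.fst, by simpa using h =≫ prod.snd⟩
  have hker : ∀ s : PullbackCone (prod.lift d c) (prod.lift 0 (𝟙 Y)), s.snd ≫ f = 0 := fun s ↦ by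
    obtain ⟨hd, hc⟩ := hcone s.condition
    rw [← hc, Category.assoc, ← hf.w, reassoc_of% hd, zero_comp]
  let lift s := (KernelFork.IsLimit.lift' hi _ (hker s)).1
  have lift_fac s : lift s ≫ i = s.snd := (KernelFork.IsLimit.lift' hi _ (hker s)).2
  obtain ⟨l, hld, hlc⟩ : ∃ l : I ⟶ R, l ≫ d = 0 ∧ l ≫ c = i :=
    ⟨hf.lift 0 i (by simp [w]), hf.lift_fst _ _ _, hf.lift_snd _ _ _⟩
  refine ⟨l, .of_isLimit (PullbackCone.IsLimit.mk (by ext <;> simp [hld, hlc]) lift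
    (fun s ↦ ?_) lift_fac (fun s m _ hm ↦ by rw [← cancel_mono i, hm, lift_fac]))⟩
  obtain ⟨hd, hc⟩ := hcone s.condition
  exact hf.hom_ext (by simp [hd, hld]) (by simp [hc, hlc, lift_fac])

lemma isClot_of_isLimit_kernelFork [HasPullbacks C] {I Y Z : C} {i : I ⟶ Y} {f : Y ⟶ Z}
    {w : i ≫ f = 0} (hi : IsLimit (KernelFork.ofι i w)) : IsClot i :=
  ⟨Fork.IsLimit.mono hi, pullback f f, pullback.fst f f, pullback.snd f f,
    pullback.lift (𝟙 Y) (𝟙 Y) rfl, ⟨fun _ _ h ↦ pullback.hom_ext (by simpa using h =≫ prod.fst)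
      (by simpa using h =≫ prod.snd)⟩, by simp, by simp,
    isZeroClass_of_isKernelPair (.of_hasPullback f) hi⟩

lemma IsClot.isIdeal {K X : C} {k : K ⟶ X} (hk : IsClot k) : IsIdeal k :=
  ⟨hk.1, K, X, k, 𝟙 X, 𝟙 K, hk, ⟨.ofIso (Iso.refl X)⟩, ⟨.ofIso (Iso.refl K)⟩, by simp⟩

end Kernel

theorem isIdeal_iff_kernel_of_exact_maltsev_general {C : Type u} [Category.{v} C]
    [HasZeroMorphisms C] [RegularCategory C]
    (maltsev : ∀ {R X : C} (d c : R ⟶ X), IsReflexiveRelation d c →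
      _root_.IsEquivalenceRelation d c)
    (exact : ∀ {R X : C} (d c : R ⟶ X), _root_.IsEquivalenceRelation d c →
      ∃ (Z : C) (f : X ⟶ Z), IsKernelPair f d c)
    {I Y : C} (i : I ⟶ Y) :
    IsIdeal i ↔
      ∃ (Z : C) (f : Y ⟶ Z) (w : i ≫ f = 0), Nonempty (IsLimit (KernelFork.ofι i w)) :=
  ⟨IsIdeal.exists_isLimit_kernelFork maltsev exact,
    fun ⟨_, _, _, ⟨hi⟩⟩ ↦ (isClot_of_isLimit_kernelFork hi).isIdeal⟩

/-- In a pointed exact Mal'tsev category, ideals and kernels coincide: a monomorphism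
`i : I ⟶ Y` is an ideal if and only if it is a kernel of some morphism.  Here "Mal'tsev"
means that every internal reflexive relation is an internal equivalence relation, and
"exact" means that every internal equivalence relation is effective, i.e. a kernel pair. -/
theorem isIdeal_iff_kernel_of_exact_maltsev {C : Type u} [Category.{v} C]
    [HasZeroObject C] [HasZeroMorphisms C] [RegularCategory C]
    (maltsev : ∀ {R X : C} (d c : R ⟶ X), IsReflexiveRelation d c →
      _root_.IsEquivalenceRelation d c)
    (exact : ∀ {R X : C} (d c : R ⟶ X), _root_.IsEquivalenceRelation d c →
      ∃ (Z : C) (f : X ⟶ Z), IsKernelPair f d c)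
    {I Y : C} (i : I ⟶ Y) (hm : Mono i) :
    IsIdeal i ↔
      ∃ (Z : C) (f : Y ⟶ Z) (w : i ≫ f = 0), Nonempty (IsLimit (KernelFork.ofι i w)) :=
  isIdeal_iff_kernel_of_exact_maltsev_general maltsev exact i
end
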